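/- Correctness of the reduction for Gibbs sampling given the square root of the Hamiltonian: Let β ≥ 4 and 0 < ε ≤ 1/16. Define the 2×2 density matrices ρ₊ = diag(1/2 − 2/β, 1/2 + 2/β) and ρ₋ = diag(1/2 + 2/β, 1/2 − 2/β), and let G± = exp(−β·(ρ±²/4)) / tr(exp(−β·(ρ±²/4))) be the Gibbs state of the Hamiltonian ρ±²/4 at inverse temperature β. Then (i) G₊ = diag(e^{1/2}, e^{−1/2})/(e^{1/2} + e^{−1/2}) and G₋ = diag(e^{−1/2}, e^{1/2})/(e^{1/2} + e^{−1/2}); (ii) for every 2×2 density matrix M with ‖M − G₊‖₁ ≤ ε, the (0,0) entry of M is a real number ≥ 2/3; and (iii) for every 2×2 density matrix M with ‖M − G₋‖₁ ≤ ε, the (0,0) entry of M is a real number ≤ 1/3. -/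

import Mathlib

open scoped ComplexOrder
open Matrix

/-- The trace norm `‖M‖₁ = tr √(M†M)` of a complex matrix. -/
noncomputable def traceNorm {m d : Type*} [Fintype m] [Fintype d] [DecidableEq d]
    (M : Matrix m d ℂ) : ℝ :=
  ((Matrix.posSemidef_conjTranspose_mul_self M).isHermitian.eigenvectorUnitary.1 *
    Matrix.diagonal (fun i => ((Real.sqrt
      ((Matrix.posSemidef_conjTranspose_mul_self M).isHermitian.eigenvalues i) : ℝ) : ℂ)) *
    (star (Matrix.posSemidef_conjTranspose_mul_self M).isHermitian.eigenvectorUnitary :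
      Matrix d d ℂ)).trace.re

lemma psd_diag_nonneg' {n : Type*} [Fintype n] [DecidableEq n]
    {S : Matrix n n ℂ} (h : S.PosSemidef) (i : n) : 0 ≤ S i i := by
  exact h.diag_nonneg

lemma abs_entry_le_traceNorm (A : Matrix (Fin 2) (Fin 2) ℂ) :
    ‖A 0 0‖ ≤ traceNorm A := by
  have hH := (Matrix.posSemidef_conjTranspose_mul_self A).isHermitian
  set U : Matrix (Fin 2) (Fin 2) ℂ := hH.eigenvectorUnitary.1 with hU
  set D : Matrix (Fin 2) (Fin 2) ℂ :=
    Matrix.diagonal (fun i => ((Real.sqrt (hH.eigenvalues i) : ℝ) : ℂ)) with hD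
  set S : Matrix (Fin 2) (Fin 2) ℂ :=
    U * D * (star hH.eigenvectorUnitary : Matrix (Fin 2) (Fin 2) ℂ) with hSdef
  have hSpsd : S.PosSemidef := by
    have hDpsd : D.PosSemidef :=
      Matrix.posSemidef_diagonal_iff.2 fun i => Complex.zero_le_real.2 (Real.sqrt_nonneg _)
    exact hDpsd.mul_mul_conjTranspose_same U
  have hmul : S * S = Aᴴ * A := by
    have hUU : (star hH.eigenvectorUnitary : Matrix (Fin 2) (Fin 2) ℂ) * U = 1 :=
      Unitary.coe_star_mul_self _
    have hDD : D * D = Matrix.diagonal (RCLike.ofReal ∘ hH.eigenvalues) := by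
      rw [hD, Matrix.diagonal_mul_diagonal]
      congr 1
      funext i
      simp only [Function.comp_apply]
      rw [← Complex.ofReal_mul,
        Real.mul_self_sqrt ((Matrix.posSemidef_conjTranspose_mul_self A).eigenvalues_nonneg i)]
      rfl
    conv_rhs => rw [hH.spectral_theorem, Unitary.conjStarAlgAut_apply]
    calc S * S = U * (D * ((star hH.eigenvectorUnitary : Matrix (Fin 2) (Fin 2) ℂ) * U) * D) *
          (star hH.eigenvectorUnitary : Matrix (Fin 2) (Fin 2) ℂ) := by
          simp only [hSdef, Matrix.mul_assoc]
      _ = _ := by rw [hUU, Matrix.mul_one, hDD]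
  have hherm := hSpsd.1
  have h00 := psd_diag_nonneg' hSpsd 0
  have h11 := psd_diag_nonneg' hSpsd 1
  have h00re : 0 ≤ (S 0 0).re := by simpa using (Complex.le_def.1 h00).1
  have h11re : 0 ≤ (S 1 1).re := by simpa using (Complex.le_def.1 h11).1
  have h00' : S 0 0 = ((S 0 0).re : ℂ) := by
    apply Complex.ext <;> simp [((Complex.le_def.1 h00).2).symm]
  have h11' : S 1 1 = ((S 1 1).re : ℂ) := by
    apply Complex.ext <;> simp [((Complex.le_def.1 h11).2).symm]
  have h10 : S 1 0 = star (S 0 1) := (hherm.apply 1 0).symm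
  set s0 := (S 0 0).re
  set s1 := (S 1 1).re
  have hdet : (0:ℂ) ≤ S.det := by
    rw [hherm.det_eq_prod_eigenvalues]
    refine Finset.prod_nonneg fun i _ => ?_
    exact Complex.zero_le_real.2 (hSpsd.eigenvalues_nonneg i)
  have hdeteq : S.det = ((s0 * s1 - Complex.normSq (S 0 1) : ℝ) : ℂ) := by
    rw [Matrix.det_fin_two, h10, Complex.star_def, Complex.mul_conj, h00', h11']
    push_cast; ring
  have hq : Complex.normSq (S 0 1) ≤ s0 * s1 := by
    have := (Complex.le_def.1 hdet).1
    rw [hdeteq] at this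
    simp at this; linarith
  have hent : (S * S) 0 0 = (Aᴴ * A) 0 0 := by rw [hmul]
  have hL : (S * S) 0 0 = ((s0 ^ 2 + Complex.normSq (S 0 1) : ℝ) : ℂ) := by
    rw [Matrix.mul_apply, Fin.sum_univ_two, h10, Complex.star_def, Complex.mul_conj, h00']
    push_cast; ring
  have hR : (Aᴴ * A) 0 0 = ((Complex.normSq (A 0 0) + Complex.normSq (A 1 0) : ℝ) : ℂ) := by
    rw [Matrix.mul_apply, Fin.sum_univ_two, Matrix.conjTranspose_apply, Matrix.conjTranspose_apply,
      Complex.star_def, ← Complex.normSq_eq_conj_mul_self, ← Complex.normSq_eq_conj_mul_self]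
    push_cast; ring
  have hkey : Complex.normSq (A 0 0) + Complex.normSq (A 1 0) = s0 ^ 2 + Complex.normSq (S 0 1) := by
    have := hent
    rw [hL, hR] at this
    exact_mod_cast this.symm
  have htr : traceNorm A = s0 + s1 := by
    show (S.trace).re = s0 + s1
    rw [Matrix.trace_fin_two]
    simp [Complex.add_re]
    rfl
  rw [htr]
  have habs : ‖A 0 0‖ ^ 2 = Complex.normSq (A 0 0) := Complex.sq_norm _
  nlinarith [Complex.normSq_nonneg (A 1 0), norm_nonneg (A 0 0),
    Complex.normSq_nonneg (S 0 1)]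

lemma gibbs_eq (a b : ℝ) :
    (NormedSpace.exp (Matrix.diagonal ![((a:ℝ):ℂ), ((b:ℝ):ℂ)])).trace⁻¹ •
      NormedSpace.exp (Matrix.diagonal ![((a:ℝ):ℂ), ((b:ℝ):ℂ)])
    = ((Real.exp a + Real.exp b : ℝ) : ℂ)⁻¹ •
        Matrix.diagonal ![((Real.exp a : ℝ):ℂ), ((Real.exp b : ℝ):ℂ)] := by
  rw [Matrix.exp_diagonal]
  have hv : (NormedSpace.exp ![((a:ℝ):ℂ), ((b:ℝ):ℂ)]) = ![((Real.exp a:ℝ):ℂ), ((Real.exp b:ℝ):ℂ)] := by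
    funext i
    rw [Pi.exp_def]
    fin_cases i <;> simp [← Complex.exp_eq_exp_ℂ, ← Complex.ofReal_exp]
  rw [hv, Matrix.trace_diagonal, Fin.sum_univ_two]
  push_cast
  rfl

lemma shift_eq (r a b : ℝ) :
    ((Real.exp (r + a) + Real.exp (r + b) : ℝ) : ℂ)⁻¹ •
      Matrix.diagonal ![((Real.exp (r + a) : ℝ):ℂ), ((Real.exp (r + b) : ℝ):ℂ)]
    = ((Real.exp a + Real.exp b : ℝ) : ℂ)⁻¹ •
        Matrix.diagonal ![((Real.exp a : ℝ):ℂ), ((Real.exp b : ℝ):ℂ)] := by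
  have hs : 0 < Real.exp a + Real.exp b := by positivity
  have h1 : (Real.exp (r + a) + Real.exp (r + b))⁻¹ * Real.exp (r + a)
      = (Real.exp a + Real.exp b)⁻¹ * Real.exp a := by
    rw [Real.exp_add, Real.exp_add, ← mul_add]
    rw [mul_inv]
    field_simp
  have h2 : (Real.exp (r + a) + Real.exp (r + b))⁻¹ * Real.exp (r + b)
      = (Real.exp a + Real.exp b)⁻¹ * Real.exp b := by
    rw [Real.exp_add, Real.exp_add, ← mul_add]
    rw [mul_inv]
    field_simp
  ext i j
  fin_cases i <;> fin_cases j <;>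
    simp [Matrix.diagonal_apply, -Complex.ofReal_exp] <;> norm_cast

lemma harg (β : ℝ) (hβ : 4 ≤ β) (x y : ℝ) (hx : x = 1/2 - 2/β) (hy : y = 1/2 + 2/β) :
    (-(β:ℂ)) • ((4:ℂ)⁻¹ • (Matrix.diagonal ![((x:ℝ):ℂ), ((y:ℝ):ℂ)] *
        Matrix.diagonal ![((x:ℝ):ℂ), ((y:ℝ):ℂ)])) =
      Matrix.diagonal ![(((-β/16 - 1/β) + (1/2) : ℝ):ℂ), (((-β/16 - 1/β) + (-(1/2)) : ℝ):ℂ)] := by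
  have hβ0 : (β:ℂ) ≠ 0 := by
    norm_cast; intro h; rw [h] at hβ; linarith
  ext i j
  fin_cases i <;> fin_cases j <;>
    simp [Matrix.mul_apply, Fin.sum_univ_two, Matrix.diagonal_apply, hx, hy,
      smul_eq_mul] <;> push_cast <;> field_simp <;> ring

lemma numeric1 : 2/3 + 1/16 ≤ (Real.exp (1/2) + Real.exp (-(1/2)))⁻¹ * Real.exp (1/2) := by
  set u := Real.exp (1/2) with hu
  set v := Real.exp (-(1/2)) with hv
  have huv : u * v = 1 := by rw [hu, hv, ← Real.exp_add]; norm_num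
  have hu2 : u ^ 2 = Real.exp 1 := by rw [hu, sq, ← Real.exp_add]; norm_num
  have he : (2.7182818283 : ℝ) < Real.exp 1 := Real.exp_one_gt_d9
  have hup : 0 < u := Real.exp_pos _
  have hvp : 0 < v := Real.exp_pos _
  have hs : 0 < u + v := by linarith
  rw [inv_mul_eq_div, le_div_iff₀ hs]
  nlinarith

lemma numeric2 : (Real.exp (1/2) + Real.exp (-(1/2)))⁻¹ * Real.exp (-(1/2)) ≤ 1/3 - 1/16 := by
  set u := Real.exp (1/2) with hu
  set v := Real.exp (-(1/2)) with hv
  have huv : u * v = 1 := by rw [hu, hv, ← Real.exp_add]; norm_num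
  have hu2 : u ^ 2 = Real.exp 1 := by rw [hu, sq, ← Real.exp_add]; norm_num
  have he : (2.7182818283 : ℝ) < Real.exp 1 := Real.exp_one_gt_d9
  have hup : 0 < u := Real.exp_pos _
  have hvp : 0 < v := Real.exp_pos _
  have hs : 0 < u + v := by linarith
  rw [inv_mul_eq_div, div_le_iff₀ hs]
  nlinarith

/-- **Correctness of the reduction for Gibbs sampling given the square root of the Hamiltonian.**
For `β ≥ 4` and `0 < ε ≤ 1/16`, with `ρ₊ = diag(1/2 − 2/β, 1/2 + 2/β)`,
`ρ₋ = diag(1/2 + 2/β, 1/2 − 2/β)` and `G± = exp(−β(ρ±²/4))/tr(exp(−β(ρ±²/4)))`: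
(i) `G₊ = diag(e^{1/2}, e^{−1/2})/(e^{1/2} + e^{−1/2})` and
    `G₋ = diag(e^{−1/2}, e^{1/2})/(e^{1/2} + e^{−1/2})`;
(ii) any density matrix `ε`-close to `G₊` in trace norm has real `(0,0)` entry `≥ 2/3`;
(iii) any density matrix `ε`-close to `G₋` in trace norm has real `(0,0)` entry `≤ 1/3`. -/
theorem sqrt_gibbs_sampling_reduction_correctness
    (β ε : ℝ) (hβ : 4 ≤ β) (hε : 0 < ε) (hε16 : ε ≤ 1 / 16)
    (ρp ρm : Matrix (Fin 2) (Fin 2) ℂ)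
    (hρp : ρp = Matrix.diagonal ![((1 / 2 - 2 / β : ℝ) : ℂ), ((1 / 2 + 2 / β : ℝ) : ℂ)])
    (hρm : ρm = Matrix.diagonal ![((1 / 2 + 2 / β : ℝ) : ℂ), ((1 / 2 - 2 / β : ℝ) : ℂ)])
    (Gp Gm : Matrix (Fin 2) (Fin 2) ℂ)
    (hGp : Gp = (NormedSpace.exp ((-(β : ℂ)) • ((4 : ℂ)⁻¹ • (ρp * ρp)))).trace⁻¹ •
      NormedSpace.exp ((-(β : ℂ)) • ((4 : ℂ)⁻¹ • (ρp * ρp))))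
    (hGm : Gm = (NormedSpace.exp ((-(β : ℂ)) • ((4 : ℂ)⁻¹ • (ρm * ρm)))).trace⁻¹ •
      NormedSpace.exp ((-(β : ℂ)) • ((4 : ℂ)⁻¹ • (ρm * ρm)))) :
    (Gp = ((Real.exp (1 / 2) + Real.exp (-(1 / 2)) : ℝ) : ℂ)⁻¹ •
        Matrix.diagonal ![((Real.exp (1 / 2) : ℝ) : ℂ), ((Real.exp (-(1 / 2)) : ℝ) : ℂ)] ∧
      Gm = ((Real.exp (1 / 2) + Real.exp (-(1 / 2)) : ℝ) : ℂ)⁻¹ •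
        Matrix.diagonal ![((Real.exp (-(1 / 2)) : ℝ) : ℂ), ((Real.exp (1 / 2) : ℝ) : ℂ)]) ∧
    (∀ M : Matrix (Fin 2) (Fin 2) ℂ, M.PosSemidef → M.trace = 1 →
      traceNorm (M - Gp) ≤ ε → (M 0 0).im = 0 ∧ 2 / 3 ≤ (M 0 0).re) ∧
    (∀ M : Matrix (Fin 2) (Fin 2) ℂ, M.PosSemidef → M.trace = 1 →
      traceNorm (M - Gm) ≤ ε → (M 0 0).im = 0 ∧ (M 0 0).re ≤ 1 / 3) := by
  have hGp' : Gp = ((Real.exp (1 / 2) + Real.exp (-(1 / 2)) : ℝ) : ℂ)⁻¹ •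
      Matrix.diagonal ![((Real.exp (1 / 2) : ℝ) : ℂ), ((Real.exp (-(1 / 2)) : ℝ) : ℂ)] := by
    rw [hGp, hρp, harg β hβ _ _ rfl rfl, gibbs_eq ((-β/16 - 1/β) + (1/2)) ((-β/16 - 1/β) + (-(1/2))),
      shift_eq (-β/16 - 1/β) (1/2) (-(1/2))]
  have hGm' : Gm = ((Real.exp (1 / 2) + Real.exp (-(1 / 2)) : ℝ) : ℂ)⁻¹ •
      Matrix.diagonal ![((Real.exp (-(1 / 2)) : ℝ) : ℂ), ((Real.exp (1 / 2) : ℝ) : ℂ)] := by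
    have harg' := harg β hβ (1/2 - 2/β) (1/2 + 2/β) rfl rfl
    -- For ρm the diagonal entries are swapped
    have hargm : (-(β:ℂ)) • ((4:ℂ)⁻¹ • (ρm * ρm)) =
        Matrix.diagonal ![(((-β/16 - 1/β) + (-(1/2)) : ℝ):ℂ), (((-β/16 - 1/β) + (1/2) : ℝ):ℂ)] := by
      have hβ0 : (β:ℂ) ≠ 0 := by
        norm_cast; intro h; rw [h] at hβ; linarith
      rw [hρm]
      ext i j
      fin_cases i <;> fin_cases j <;>
        simp [Matrix.mul_apply, Fin.sum_univ_two, Matrix.diagonal_apply, smul_eq_mul] <;>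
        push_cast <;> field_simp <;> ring
    rw [hGm, hargm, gibbs_eq ((-β/16 - 1/β) + (-(1/2))) ((-β/16 - 1/β) + (1/2)),
      shift_eq (-β/16 - 1/β) (-(1/2)) (1/2),
      show Real.exp (-(1/2)) + Real.exp (1/2) = Real.exp (1/2) + Real.exp (-(1/2)) from add_comm _ _]
  refine ⟨⟨hGp', hGm'⟩, ?_, ?_⟩
  · intro M hM htrace hclose
    have him : (M 0 0).im = 0 := by
      have h := hM.1.apply 0 0
      rw [Complex.star_def] at h
      exact Complex.conj_eq_iff_im.1 h
    refine ⟨him, ?_⟩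
    have hA := abs_entry_le_traceNorm (M - Gp)
    have hGpe : Gp 0 0 = ((((Real.exp (1/2) + Real.exp (-(1/2)))⁻¹ * Real.exp (1/2)) : ℝ) : ℂ) := by
      rw [hGp']
      simp [Matrix.smul_apply, Matrix.diagonal_apply, -Complex.ofReal_exp]
    have hsub : (M - Gp) 0 0 =
        (((M 0 0).re - (Real.exp (1/2) + Real.exp (-(1/2)))⁻¹ * Real.exp (1/2) : ℝ) : ℂ) := by
      rw [Matrix.sub_apply, hGpe]
      apply Complex.ext <;> simp [him]
    rw [hsub, Complex.norm_real, Real.norm_eq_abs] at hA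
    have h1 := abs_le.1 (hA.trans hclose)
    have := numeric1
    have : (1:ℝ)/2 = 1/2 := rfl
    linarith [numeric1, h1.1, hε16]
  · intro M hM htrace hclose
    have him : (M 0 0).im = 0 := by
      have h := hM.1.apply 0 0
      rw [Complex.star_def] at h
      exact Complex.conj_eq_iff_im.1 h
    refine ⟨him, ?_⟩
    have hA := abs_entry_le_traceNorm (M - Gm)
    have hGme : Gm 0 0 = ((((Real.exp (1/2) + Real.exp (-(1/2)))⁻¹ * Real.exp (-(1/2))) : ℝ) : ℂ) := by
      rw [hGm']
      simp [Matrix.smul_apply, Matrix.diagonal_apply, -Complex.ofReal_exp]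
    have hsub : (M - Gm) 0 0 =
        (((M 0 0).re - (Real.exp (1/2) + Real.exp (-(1/2)))⁻¹ * Real.exp (-(1/2)) : ℝ) : ℂ) := by
      rw [Matrix.sub_apply, hGme]
      apply Complex.ext <;> simp [him]
    rw [hsub, Complex.norm_real, Real.norm_eq_abs] at hA
    have h1 := abs_le.1 (hA.trans hclose)
    linarith [numeric2, h1.2, hε16]
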